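/- arXiv:2308.01839 — 3 statements merged into one kernel-verified Lean document; each statement's English description precedes it below -/
import Mathlib

section
/- Let X₁, X₂ ∈ ℝ^{p×q} with X₁ ≠ 0, and let X₁ᵀX₂ = UΣVᵀ be a singular value decomposition with singular values σ₁ ≥ ⋯ ≥ σ_q ≥ 0. Set Γ̂ = UVᵀ and α̂ = (σ₁ + ⋯ + σ_q)/‖X₁‖_F². Then (α̂, Γ̂) is a global minimizer of the scaled orthogonal Procrustes problem: for every Γ ∈ O(q) and every α ∈ ℝ, ‖X₂ − α̂ X₁ Γ̂‖_F² ≤ ‖X₂ − α X₁ Γ‖_F², and the minimum value equals ‖X₂‖_F² − (σ₁ + ⋯ + σ_q)² / ‖X₁‖_F². -/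
open Matrix Finset

/-- Squared Frobenius norm of a real matrix. -/
noncomputable def frobSq {p q : ℕ} (A : Matrix (Fin p) (Fin q) ℝ) : ℝ :=
  ∑ i, ∑ j, (A i j) ^ 2

lemma frobSq_eq_trace {p q : ℕ} (A : Matrix (Fin p) (Fin q) ℝ) :
    frobSq A = Matrix.trace (Aᵀ * A) := by
  simp only [frobSq, Matrix.trace, Matrix.diag, Matrix.mul_apply, Matrix.transpose_apply, sq]
  exact Finset.sum_comm

lemma ip_eq_trace {p q : ℕ} (A B : Matrix (Fin p) (Fin q) ℝ) :
    ∑ i, ∑ j, A i j * B i j = Matrix.trace (Aᵀ * B) := by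
  simp only [Matrix.trace, Matrix.diag, Matrix.mul_apply, Matrix.transpose_apply]
  exact Finset.sum_comm

lemma frobSq_pos {p q : ℕ} {A : Matrix (Fin p) (Fin q) ℝ} (h : A ≠ 0) :
    0 < frobSq A := by
  obtain ⟨i, j, hij⟩ : ∃ i j, A i j ≠ 0 := by
    by_contra hc; push_neg at hc
    exact h (by ext i j; simp [hc])
  calc (0:ℝ) < (A i j)^2 := by positivity
    _ ≤ ∑ j', (A i j')^2 :=
        Finset.single_le_sum (f := fun j' => (A i j')^2)
          (fun _ _ => sq_nonneg _) (Finset.mem_univ _)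
    _ ≤ frobSq A :=
        Finset.single_le_sum (f := fun i' => ∑ j', (A i' j')^2)
          (fun _ _ => Finset.sum_nonneg fun _ _ => sq_nonneg _) (Finset.mem_univ _)

lemma frobSq_sub_smul {p q : ℕ} (A B : Matrix (Fin p) (Fin q) ℝ) (α : ℝ) :
    frobSq (A - α • B)
      = frobSq A - 2*α*(∑ i, ∑ j, A i j * B i j) + α^2 * frobSq B := by
  have h : ∀ x y : ℝ, (x - α*y)^2 = x^2 - 2*α*(x*y) + α^2*y^2 := by intros; ring
  simp only [frobSq, Matrix.sub_apply, Matrix.smul_apply, smul_eq_mul, h,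
    Finset.sum_add_distrib, Finset.sum_sub_distrib, Finset.mul_sum]

lemma diag_sq_le_one {q : ℕ} {W : Matrix (Fin q) (Fin q) ℝ} (hW : Wᵀ * W = 1) (i : Fin q) :
    (W i i)^2 ≤ 1 := by
  have h : ∑ k, W k i * W k i = 1 := by
    have := congrFun (congrFun hW i) i
    simpa [Matrix.mul_apply, Matrix.one_apply] using this
  calc (W i i)^2 = W i i * W i i := by ring
    _ ≤ ∑ k, W k i * W k i :=
        Finset.single_le_sum (f := fun k => W k i * W k i)
          (fun k _ => mul_self_nonneg _) (Finset.mem_univ i)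
    _ = 1 := h

/-- **Scaled orthogonal Procrustes problem.**
If `X₁ᵀX₂ = U (diagonal σ) Vᵀ` is an SVD with `σ₁ ≥ ⋯ ≥ σ_q ≥ 0` and `X₁ ≠ 0`, then
`Γ̂ = UVᵀ` and `α̂ = (∑ σᵢ)/‖X₁‖_F²` globally minimize `‖X₂ − α X₁ Γ‖_F²` over
`Γ ∈ O(q)`, `α ∈ ℝ`, and the minimum value is `‖X₂‖_F² − (∑ σᵢ)²/‖X₁‖_F²`. -/
theorem stmt_0 {p q : ℕ} (X₁ X₂ : Matrix (Fin p) (Fin q) ℝ) (hX₁ : X₁ ≠ 0)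
    (U V : Matrix (Fin q) (Fin q) ℝ) (σ : Fin q → ℝ)
    (hU : Uᵀ * U = 1) (hV : Vᵀ * V = 1)
    (hσ_mono : Antitone σ) (hσ_nonneg : ∀ i, 0 ≤ σ i)
    (hSVD : X₁ᵀ * X₂ = U * Matrix.diagonal σ * Vᵀ) :
    (∀ (Γ : Matrix (Fin q) (Fin q) ℝ) (α : ℝ), Γᵀ * Γ = 1 →
      frobSq (X₂ - ((∑ i, σ i) / frobSq X₁) • (X₁ * (U * Vᵀ)))
        ≤ frobSq (X₂ - α • (X₁ * Γ))) ∧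
    frobSq (X₂ - ((∑ i, σ i) / frobSq X₁) • (X₁ * (U * Vᵀ)))
      = frobSq X₂ - (∑ i, σ i) ^ 2 / frobSq X₁ := by
  have hc : 0 < frobSq X₁ := frobSq_pos hX₁
  set s : ℝ := ∑ i, σ i with hs
  set c : ℝ := frobSq X₁ with hcdef
  have hs0 : 0 ≤ s := Finset.sum_nonneg fun i _ => hσ_nonneg i
  have hVVt : V * Vᵀ = 1 := mul_eq_one_comm.mp hV
  -- trace identity for any orthogonal Γ
  have key : ∀ (Γ : Matrix (Fin q) (Fin q) ℝ),
      Matrix.trace (X₂ᵀ * (X₁ * Γ))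
        = Matrix.trace ((Vᵀ * Γᵀ * U) * Matrix.diagonal σ) := by
    intro Γ
    have h1 : Matrix.trace (X₂ᵀ * (X₁ * Γ)) = Matrix.trace (Γᵀ * (X₁ᵀ * X₂)) := by
      rw [← Matrix.trace_transpose (X₂ᵀ * (X₁ * Γ))]
      simp [Matrix.transpose_mul, Matrix.mul_assoc]
    rw [h1, hSVD,
      show Γᵀ * (U * Matrix.diagonal σ * Vᵀ) = (Γᵀ * U * Matrix.diagonal σ) * Vᵀ by
        simp [Matrix.mul_assoc],
      Matrix.trace_mul_comm]
    simp [Matrix.mul_assoc]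
  -- orthogonality of UVᵀ
  have hΓhat : (U * Vᵀ)ᵀ * (U * Vᵀ) = 1 := by
    rw [Matrix.transpose_mul, Matrix.transpose_transpose, Matrix.mul_assoc,
      ← Matrix.mul_assoc Uᵀ U Vᵀ, hU, Matrix.one_mul, hVVt]
  -- trace at optimum equals s
  have hWopt : Vᵀ * (U * Vᵀ)ᵀ * U = 1 := by
    rw [Matrix.transpose_mul, Matrix.transpose_transpose,
      ← Matrix.mul_assoc Vᵀ V Uᵀ, hV, Matrix.one_mul, hU]
  have htopt : Matrix.trace (X₂ᵀ * (X₁ * (U * Vᵀ))) = s := by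
    rw [key (U * Vᵀ), hWopt, Matrix.one_mul, Matrix.trace_diagonal]
  -- frobSq (X₁ * Γ) = c for orthogonal Γ
  have hfrobΓ : ∀ Γ : Matrix (Fin q) (Fin q) ℝ, Γᵀ * Γ = 1 → frobSq (X₁ * Γ) = c := by
    intro Γ hΓ
    have hΓΓ : Γ * Γᵀ = 1 := mul_eq_one_comm.mp hΓ
    rw [hcdef, frobSq_eq_trace, frobSq_eq_trace X₁, Matrix.transpose_mul,
      show Γᵀ * X₁ᵀ * (X₁ * Γ) = Γᵀ * (X₁ᵀ * X₁ * Γ) by simp [Matrix.mul_assoc],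
      Matrix.trace_mul_comm, Matrix.mul_assoc, hΓΓ, Matrix.mul_one]
  -- expansion
  have hexp : ∀ (Γ : Matrix (Fin q) (Fin q) ℝ) (α : ℝ), Γᵀ * Γ = 1 →
      frobSq (X₂ - α • (X₁ * Γ))
        = frobSq X₂ - 2*α*(Matrix.trace (X₂ᵀ * (X₁ * Γ))) + α^2 * c := by
    intro Γ α hΓ
    rw [frobSq_sub_smul, ip_eq_trace, hfrobΓ Γ hΓ]
  -- bound on trace for orthogonal Γ
  have hbound : ∀ Γ : Matrix (Fin q) (Fin q) ℝ, Γᵀ * Γ = 1 →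
      |Matrix.trace (X₂ᵀ * (X₁ * Γ))| ≤ s := by
    intro Γ hΓ
    have hΓΓ : Γ * Γᵀ = 1 := mul_eq_one_comm.mp hΓ
    set W := Vᵀ * Γᵀ * U with hW
    have hWorth : Wᵀ * W = 1 := by
      rw [hW, Matrix.transpose_mul, Matrix.transpose_mul, Matrix.transpose_transpose,
        Matrix.transpose_transpose]
      calc Uᵀ * (Γ * V) * (Vᵀ * Γᵀ * U)
          = Uᵀ * (Γ * (V * Vᵀ) * Γᵀ * U) := by simp [Matrix.mul_assoc]
        _ = 1 := by rw [hVVt, Matrix.mul_one, Matrix.mul_assoc Γ Γᵀ U, ← Matrix.mul_assoc Γ Γᵀ U] <;>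
            rw [hΓΓ, Matrix.one_mul, hU]
    rw [key Γ]
    have htr : Matrix.trace (W * Matrix.diagonal σ) = ∑ i, W i i * σ i := by
      simp [Matrix.trace, Matrix.diag, Matrix.mul_diagonal]
    rw [htr]
    calc |∑ i, W i i * σ i| ≤ ∑ i, |W i i * σ i| := Finset.abs_sum_le_sum_abs _ _
      _ ≤ ∑ i, σ i := by
        refine Finset.sum_le_sum fun i _ => ?_
        rw [abs_mul, abs_of_nonneg (hσ_nonneg i)]
        have h1 : |W i i| ≤ 1 := by
          have := diag_sq_le_one hWorth i
          nlinarith [abs_nonneg (W i i), sq_abs (W i i)]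
        nlinarith [hσ_nonneg i, abs_nonneg (W i i)]
  -- the value at the optimum
  have hval : frobSq (X₂ - (s / c) • (X₁ * (U * Vᵀ))) = frobSq X₂ - s^2/c := by
    rw [hexp (U * Vᵀ) (s / c) hΓhat, htopt]
    field_simp
    ring
  refine ⟨fun Γ α hΓ => ?_, hval⟩
  rw [hval, hexp Γ α hΓ]
  set t := Matrix.trace (X₂ᵀ * (X₁ * Γ)) with ht
  have hb := hbound Γ hΓ
  have ht2 : t^2 ≤ s^2 := by
    have := abs_le.mp hb
    nlinarith [this.1, this.2]
  have hkey : s^2/c * c = s^2 := div_mul_cancel₀ _ (ne_of_gt hc)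
  nlinarith [sq_nonneg (α*c - t), hc, mul_pos hc hc]
end

section
/- Let X̄₁, X̄₂ ∈ ℝ^{p×q} be column-centered matrices, i.e. 𝟙_pᵀX̄₁ = 0 and 𝟙_pᵀX̄₂ = 0, with X̄₁ ≠ 0, and let X̄₁ᵀX̄₂ = UΣVᵀ be a singular value decomposition with singular values σ₁ ≥ ⋯ ≥ σ_q ≥ 0. Set γ̂ = 0 ∈ ℝ^q, R̂ = UVᵀ, and β̂ = tr(X̄₂ᵀX̄₁R̂)/‖X̄₁‖_F² = (σ₁ + ⋯ + σ_q)/‖X̄₁‖_F². Then (β̂, γ̂, R̂) is a global minimizer of the similarity Procrustes problem: for every R ∈ O(q), β ∈ ℝ, and γ ∈ ℝ^q, ‖X̄₂ − β̂ X̄₁ R̂ − 𝟙_p γ̂ᵀ‖_F² ≤ ‖X̄₂ − β X̄₁ R − 𝟙_p γᵀ‖_F². -/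
open Matrix Finset

/-- The rank-one matrix `𝟙_p γᵀ` whose `(i,j)` entry is `γ j`. -/
def onesOuter (p : ℕ) {q : ℕ} (γ : Fin q → ℝ) : Matrix (Fin p) (Fin q) ℝ :=
  Matrix.of fun _ j => γ j

noncomputable def ipM {p q : ℕ} (A B : Matrix (Fin p) (Fin q) ℝ) : ℝ :=
  ∑ i, ∑ j, A i j * B i j

lemma ipM_eq_trace {p q : ℕ} (A B : Matrix (Fin p) (Fin q) ℝ) :
    ipM A B = Matrix.trace (Aᵀ * B) := by
  simp only [ipM, Matrix.trace, Matrix.diag, Matrix.mul_apply, Matrix.transpose_apply]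
  exact Finset.sum_comm

lemma frobSq_eq_ipM {p q : ℕ} (A : Matrix (Fin p) (Fin q) ℝ) : frobSq A = ipM A A := by
  simp [frobSq, ipM, sq]

lemma frobSq_nonneg {p q : ℕ} (A : Matrix (Fin p) (Fin q) ℝ) : 0 ≤ frobSq A :=
  Finset.sum_nonneg fun _ _ => Finset.sum_nonneg fun _ _ => sq_nonneg _

lemma expand {p q : ℕ} (A B C : Matrix (Fin p) (Fin q) ℝ) (b : ℝ) :
    frobSq (A - b • B - C) = frobSq A + b^2 * frobSq B + frobSq C
      - 2*b*ipM A B - 2*(ipM A C) + 2*b*(ipM B C) := by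
  have h : ∀ x y z : ℝ, (x - b*y - z)^2
      = x^2 + b^2*y^2 + z^2 - 2*b*(x*y) - 2*(x*z) + 2*b*(y*z) := by intros; ring
  simp only [frobSq, ipM, Matrix.sub_apply, Matrix.smul_apply, smul_eq_mul, h,
    Finset.sum_add_distrib, Finset.sum_sub_distrib, Finset.mul_sum]

lemma ipM_onesOuter {p q : ℕ} (A : Matrix (Fin p) (Fin q) ℝ) (γ : Fin q → ℝ)
    (hA : ∀ j, ∑ i, A i j = 0) : ipM A (onesOuter p γ) = 0 := by
  simp only [ipM, onesOuter, Matrix.of_apply]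
  rw [Finset.sum_comm]
  simp [← Finset.sum_mul, hA]

lemma col_sum_mul {p q : ℕ} (A : Matrix (Fin p) (Fin q) ℝ) (R : Matrix (Fin q) (Fin q) ℝ)
    (hA : ∀ j, ∑ i, A i j = 0) : ∀ j, ∑ i, (A * R) i j = 0 := by
  intro j
  simp only [Matrix.mul_apply]
  rw [Finset.sum_comm]
  simp [← Finset.sum_mul, hA]

lemma diag_abs_le_one {q : ℕ} (M : Matrix (Fin q) (Fin q) ℝ) (hM : Mᵀ * M = 1) :
    ∀ i, |M i i| ≤ 1 := by
  intro i
  have h1 : (Mᵀ * M) i i = 1 := by rw [hM]; simp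
  have h2 : ∑ k, M k i * M k i = 1 := by
    simpa [Matrix.mul_apply, Matrix.transpose_apply] using h1
  have h3 : M i i * M i i ≤ ∑ k, M k i * M k i :=
    Finset.single_le_sum (fun k _ => mul_self_nonneg (M k i)) (Finset.mem_univ i)
  rw [h2] at h3
  nlinarith [abs_nonneg (M i i), sq_abs (M i i)]

/-- **Similarity Procrustes problem for column-centered matrices.**
If `X̄₁, X̄₂` are column-centered (`𝟙_pᵀX̄ℓ = 0`), `X̄₁ ≠ 0`, and
`X̄₁ᵀX̄₂ = U (diagonal σ) Vᵀ` is an SVD with `σ₁ ≥ ⋯ ≥ σ_q ≥ 0`, then with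
`γ̂ = 0`, `R̂ = UVᵀ` and `β̂ = tr(X̄₂ᵀX̄₁R̂)/‖X̄₁‖_F² = (∑ σᵢ)/‖X̄₁‖_F²`,
the triple `(β̂, γ̂, R̂)` globally minimizes `‖X̄₂ − β X̄₁ R − 𝟙_p γᵀ‖_F²`
over `R ∈ O(q)`, `β ∈ ℝ`, `γ ∈ ℝ^q`. -/
theorem stmt_1 {p q : ℕ} (X₁ X₂ : Matrix (Fin p) (Fin q) ℝ)
    (hc1 : ∀ j, ∑ i, X₁ i j = 0) (hc2 : ∀ j, ∑ i, X₂ i j = 0)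
    (hX₁ : X₁ ≠ 0)
    (U V : Matrix (Fin q) (Fin q) ℝ) (σ : Fin q → ℝ)
    (hU : Uᵀ * U = 1) (hV : Vᵀ * V = 1)
    (hσ_mono : Antitone σ) (hσ_nonneg : ∀ i, 0 ≤ σ i)
    (hSVD : X₁ᵀ * X₂ = U * Matrix.diagonal σ * Vᵀ) :
    Matrix.trace (X₂ᵀ * X₁ * (U * Vᵀ)) = ∑ i, σ i ∧
    (∀ (R : Matrix (Fin q) (Fin q) ℝ) (β : ℝ) (γ : Fin q → ℝ), Rᵀ * R = 1 →
      frobSq (X₂ - (Matrix.trace (X₂ᵀ * X₁ * (U * Vᵀ)) / frobSq X₁) • (X₁ * (U * Vᵀ))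
              - onesOuter p (0 : Fin q → ℝ))
        ≤ frobSq (X₂ - β • (X₁ * R) - onesOuter p γ)) := by
  have hUUT : U * Uᵀ = 1 := mul_eq_one_comm.mp hU
  have hVVT : V * Vᵀ = 1 := mul_eq_one_comm.mp hV
  have hX21 : X₂ᵀ * X₁ = V * Matrix.diagonal σ * Uᵀ := by
    have h := congrArg Matrix.transpose hSVD
    simpa [Matrix.transpose_mul, Matrix.diagonal_transpose, mul_assoc] using h
  have key : ∀ R : Matrix (Fin q) (Fin q) ℝ,
      Matrix.trace (X₂ᵀ * X₁ * R) = ∑ i, σ i * (Uᵀ * (R * V)) i i := by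
    intro R
    rw [hX21, mul_assoc, mul_assoc, Matrix.trace_mul_comm, mul_assoc, mul_assoc]
    simp only [Matrix.trace, Matrix.diag, Matrix.diagonal_mul]
  have part1 : Matrix.trace (X₂ᵀ * X₁ * (U * Vᵀ)) = ∑ i, σ i := by
    rw [key]
    have h1 : Uᵀ * ((U * Vᵀ) * V) = 1 := by
      rw [mul_assoc U Vᵀ V, hV, mul_one, hU]
    rw [h1]
    simp [Matrix.one_apply]
  refine ⟨part1, ?_⟩
  intro R β γ hR
  have hRRT : R * Rᵀ = 1 := mul_eq_one_comm.mp hR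
  have ht : 0 < frobSq X₁ := by
    obtain ⟨i, j, hij⟩ : ∃ i j, X₁ i j ≠ 0 := by
      by_contra h; push_neg at h
      exact hX₁ (by ext i j; simpa using h i j)
    have h0 : 0 < (X₁ i j)^2 := by positivity
    have h1 : (X₁ i j)^2 ≤ ∑ j', (X₁ i j')^2 :=
      Finset.single_le_sum (f := fun j' => (X₁ i j')^2)
        (fun _ _ => sq_nonneg _) (Finset.mem_univ j)
    have h2 : ∑ j', (X₁ i j')^2 ≤ frobSq X₁ :=
      Finset.single_le_sum (f := fun i => ∑ j', (X₁ i j')^2)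
        (fun _ _ => Finset.sum_nonneg fun _ _ => sq_nonneg _) (Finset.mem_univ i)
    linarith
  have hS : 0 ≤ ∑ i, σ i := Finset.sum_nonneg fun i _ => hσ_nonneg i
  have hM : (Uᵀ * (R * V))ᵀ * (Uᵀ * (R * V)) = 1 := by
    have h1 : (Uᵀ * (R * V))ᵀ * (Uᵀ * (R * V)) = (R * V)ᵀ * ((U * Uᵀ) * (R * V)) := by
      simp [Matrix.transpose_mul, mul_assoc]
    rw [h1, hUUT, one_mul, Matrix.transpose_mul, mul_assoc, ← mul_assoc Rᵀ R V, hR,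
      one_mul, hV]
  have hcS : |Matrix.trace (X₂ᵀ * X₁ * R)| ≤ ∑ i, σ i := by
    rw [key R]
    calc |∑ i, σ i * (Uᵀ * (R * V)) i i| ≤ ∑ i, |σ i * (Uᵀ * (R * V)) i i| :=
          Finset.abs_sum_le_sum_abs _ _
      _ ≤ ∑ i, σ i := by
          refine Finset.sum_le_sum fun i _ => ?_
          rw [abs_mul, abs_of_nonneg (hσ_nonneg i)]
          have h2 := diag_abs_le_one _ hM i
          nlinarith [abs_nonneg ((Uᵀ * (R * V)) i i), hσ_nonneg i]
  have hfrobR : ∀ R' : Matrix (Fin q) (Fin q) ℝ, R' * R'ᵀ = 1 →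
      frobSq (X₁ * R') = frobSq X₁ := by
    intro R' hR'
    rw [frobSq_eq_ipM, ipM_eq_trace, Matrix.transpose_mul, Matrix.trace_mul_comm,
      ← Matrix.mul_assoc, Matrix.mul_assoc X₁ R' R'ᵀ, hR', Matrix.mul_one,
      Matrix.trace_mul_comm, ← ipM_eq_trace, ← frobSq_eq_ipM]
  have hUVo : (U * Vᵀ) * (U * Vᵀ)ᵀ = 1 := by
    rw [Matrix.transpose_mul, Matrix.transpose_transpose, mul_assoc,
      ← mul_assoc Vᵀ V Uᵀ, hV, one_mul, hUUT]
  have hO0 : frobSq (onesOuter p (0 : Fin q → ℝ)) = 0 := by simp [frobSq, onesOuter]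
  have hg : 0 ≤ frobSq (onesOuter p γ) := frobSq_nonneg _
  have hipUV : ipM X₂ (X₁ * (U * Vᵀ)) = ∑ i, σ i := by
    rw [ipM_eq_trace, ← Matrix.mul_assoc]; exact part1
  have hipR : ipM X₂ (X₁ * R) = Matrix.trace (X₂ᵀ * X₁ * R) := by
    rw [ipM_eq_trace, ← Matrix.mul_assoc]
  rw [part1, expand, expand, hfrobR _ hUVo, hfrobR _ hRRT,
    ipM_onesOuter X₂ _ hc2, ipM_onesOuter X₂ _ hc2,
    ipM_onesOuter _ _ (col_sum_mul X₁ _ hc1), ipM_onesOuter _ _ (col_sum_mul X₁ _ hc1),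
    hO0, hipUV, hipR]
  set t := frobSq X₁ with ht_def
  set S := ∑ i, σ i with hS_def
  set c := Matrix.trace (X₂ᵀ * X₁ * R) with hc_def
  set g := frobSq (onesOuter p γ) with hg_def
  have hc2' : c^2 ≤ S^2 := by nlinarith [sq_abs c, abs_nonneg c]
  have h1 : (S/t)^2 * t = S^2/t := by field_simp
  have h2 : 2*(S/t)*S = 2*(S^2/t) := by ring
  rw [h1, h2]
  have hu : S^2/t * t = S^2 := div_mul_cancel₀ _ (ne_of_gt ht)
  nlinarith [sq_nonneg (β*t - c), mul_nonneg hg ht.le, mul_pos ht ht]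
end

section
/- Let (Aₙ) and (Bₙ) be sequences of real random variables such that, for each n, Aₙ and Bₙ are independent, and such that Aₙ converges in distribution to N(0,1) and Bₙ converges in distribution to N(0,1). Let (w₁ₙ), (w₂ₙ) be real sequences with w₁ₙ² + w₂ₙ² = 1 for all n and w₁ₙ → w₁, w₂ₙ → w₂ as n → ∞, and let (cₙ) be a sequence of real random variables converging to 0 in probability. Then w₁ₙAₙ + w₂ₙBₙ + cₙ converges in distribution to N(0,1). -/
open MeasureTheory Filter

/-- Convergence in distribution: weak convergence of the push-forward laws, phrased via
integrals of bounded continuous functions. -/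
def TendstoInDistribution {Ω E : Type*} [MeasurableSpace Ω] [TopologicalSpace E] [MeasurableSpace E]
    (P : Measure Ω) (X : ℕ → Ω → E) (μ : Measure E) : Prop :=
  ∀ g : BoundedContinuousFunction E ℝ,
    Tendsto (fun n => ∫ ω, g (X n ω) ∂P) atTop (nhds (∫ x, g x ∂μ))

/-!
By independence, the law of `(Aₙ, Bₙ)` is the product of the laws of `Aₙ` and `Bₙ`, and the
product of probability measures is weakly continuous, so `(Aₙ, Bₙ)` converges in distribution to
`N(0,1) ⊗ N(0,1)`. Slutsky's theorem, applied to the deterministic weights `(w₁ₙ, w₂ₙ) → (w₁, w₂)`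
and then to `cₙ → 0` in probability, gives convergence of `w₁ₙAₙ + w₂ₙBₙ + cₙ` to the law of
`w₁G₁ + w₂G₂` for independent standard Gaussians `G₁, G₂`, that is, to `N(0, w₁² + w₂²) = N(0,1)`.
-/

open ProbabilityTheory
open scoped BoundedContinuousFunction NNReal

section Bridge

variable {Ω Ω' E : Type*} [MeasurableSpace Ω] [MeasurableSpace Ω'] [TopologicalSpace E]
  [MeasurableSpace E] [OpensMeasurableSpace E] {P : Measure Ω} [IsProbabilityMeasure P]
  {μ : Measure Ω'} [IsProbabilityMeasure μ]

theorem tendstoInDistribution_map_iff {X : ℕ → Ω → E} (hX : ∀ n, AEMeasurable (X n) P)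
    {Z : Ω' → E} (hZ : AEMeasurable Z μ) :
    _root_.TendstoInDistribution P X (μ.map Z) ↔
      MeasureTheory.TendstoInDistribution X atTop Z (fun _ ↦ P) μ := by
  have hlaw : ∀ (g : E →ᵇ ℝ) (n : ℕ), ∫ ω, g (X n ω) ∂P = ∫ x, g x ∂(P.map (X n)) :=
    fun g n ↦ (integral_map (hX n) g.continuous.aestronglyMeasurable).symm
  refine ⟨fun h ↦ ⟨hX, hZ, ProbabilityMeasure.tendsto_iff_forall_integral_tendsto.2 fun g ↦ ?_⟩,
    fun h g ↦ ?_⟩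
  · simpa only [ProbabilityMeasure.coe_mk, ← hlaw] using h g
  · simpa only [ProbabilityMeasure.coe_mk, ← hlaw] using
      ProbabilityMeasure.tendsto_iff_forall_integral_tendsto.1 h.tendsto g

end Bridge

section Independent

variable {ι Ω E F : Type*} [MeasurableSpace Ω] {P : Measure Ω} [IsProbabilityMeasure P]
  {l : Filter ι}
  [TopologicalSpace E] [MeasurableSpace E] [BorelSpace E] [SecondCountableTopology E]
  [TopologicalSpace.PseudoMetrizableSpace E]
  [TopologicalSpace F] [MeasurableSpace F] [BorelSpace F] [SecondCountableTopology F]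
  [TopologicalSpace.PseudoMetrizableSpace F]
  {μ : Measure E} [IsProbabilityMeasure μ] {ν : Measure F} [IsProbabilityMeasure ν]

theorem MeasureTheory.TendstoInDistribution.prodMk_of_indepFun {X : ι → Ω → E} {Y : ι → Ω → F}
    (hX : TendstoInDistribution X l id (fun _ ↦ P) μ)
    (hY : TendstoInDistribution Y l id (fun _ ↦ P) ν) (hXY : ∀ i, IndepFun (X i) (Y i) P) :
    TendstoInDistribution (fun i ω ↦ (X i ω, Y i ω)) l id (fun _ ↦ P) (μ.prod ν) where
  forall_aemeasurable i := (hX.forall_aemeasurable i).prodMk (hY.forall_aemeasurable i)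
  aemeasurable_limit := aemeasurable_id
  tendsto := by
    have hlaw : ∀ i, P.map (fun ω ↦ (X i ω, Y i ω)) = (P.map (X i)).prod (P.map (Y i)) := fun i ↦
      (hXY i).map_prod_eq_prod_map_map (hX.forall_aemeasurable i) (hY.forall_aemeasurable i)
    have hprod :=
      (ProbabilityMeasure.continuous_prod.tendsto _).comp (hX.tendsto.prodMk_nhds hY.tendsto)
    refine (hprod.congr fun i ↦ Subtype.ext (hlaw i).symm).trans (le_of_eq ?_)
    exact congrArg nhds (Subtype.ext (by simp only [Measure.map_id]; rfl))

end Independent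

theorem gaussianReal_prod_map_linear {m₁ m₂ : ℝ} {v₁ v₂ : ℝ≥0} (a b : ℝ) :
    ((gaussianReal m₁ v₁).prod (gaussianReal m₂ v₂)).map (fun p ↦ a * p.1 + b * p.2) =
      gaussianReal (a * m₁ + b * m₂) (⟨a ^ 2 * v₁ + b ^ 2 * v₂, by positivity⟩ : ℝ≥0) := by
  have hlin : (fun p : ℝ × ℝ ↦ a * p.1 + b * p.2) =
      (fun p ↦ p.1 + p.2) ∘ Prod.map (a * ·) (b * ·) := rfl
  rw [hlin, ← Measure.map_map (by fun_prop) (by fun_prop),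
    ← Measure.map_prod_map _ _ (by fun_prop) (by fun_prop),
    gaussianReal_map_const_mul, gaussianReal_map_const_mul]
  refine gaussianReal_conv_gaussianReal.trans ?_
  congr 1

theorem tendstoInMeasure_const_of_tendsto {α ι E : Type*} [MeasurableSpace α] {μ : Measure α}
    [PseudoEMetricSpace E] {l : Filter ι} {u : ι → E} {c : E} (hu : Tendsto u l (nhds c)) :
    TendstoInMeasure μ (fun i _ ↦ u i) l (fun _ ↦ c) := fun ε hε ↦
  tendsto_const_nhds.congr' <| (EMetric.tendsto_nhds.1 hu ε hε).mono fun i hi ↦ by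
    simp [not_le.2 hi]

theorem tendstoInMeasure_zero_of_tendsto_measure_lt_norm {α ι E : Type*} [MeasurableSpace α]
    {μ : Measure α} [SeminormedAddCommGroup E] {l : Filter ι} {f : ι → α → E}
    (h : ∀ ε > (0 : ℝ), Tendsto (fun i ↦ μ {x | ε < ‖f i x‖}) l (nhds 0)) :
    TendstoInMeasure μ f l 0 := by
  refine tendstoInMeasure_iff_norm.2 fun ε hε ↦ ?_
  refine tendsto_of_tendsto_of_tendsto_of_le_of_le tendsto_const_nhds (h (ε / 2) (by positivity))
    (fun _ ↦ zero_le) fun i ↦ measure_mono fun x hx ↦ ?_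
  simp only [Set.mem_ofPred_eq, Pi.zero_apply, sub_zero] at hx ⊢
  linarith

/-- **A Slutsky-type lemma.** If for each `n` the random variables `Aₙ` and `Bₙ` are
independent, `Aₙ →ᵈ N(0,1)`, `Bₙ →ᵈ N(0,1)`, the real weights satisfy
`w₁ₙ² + w₂ₙ² = 1` and converge, and `cₙ → 0` in probability, then
`w₁ₙAₙ + w₂ₙBₙ + cₙ →ᵈ N(0,1)`. -/
theorem stmt_9 {Ω : Type*} [MeasurableSpace Ω] (P : Measure Ω) [IsProbabilityMeasure P]
    (A B c : ℕ → Ω → ℝ)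
    (hA : ∀ n, Measurable (A n)) (hB : ∀ n, Measurable (B n)) (hc : ∀ n, Measurable (c n))
    (hIndep : ∀ n, ProbabilityTheory.IndepFun (A n) (B n) P)
    (hAconv : TendstoInDistribution P A (ProbabilityTheory.gaussianReal 0 1))
    (hBconv : TendstoInDistribution P B (ProbabilityTheory.gaussianReal 0 1))
    (w₁ w₂ : ℕ → ℝ) (hw : ∀ n, (w₁ n) ^ 2 + (w₂ n) ^ 2 = 1)
    (w₁' w₂' : ℝ) (hw₁ : Tendsto w₁ atTop (nhds w₁')) (hw₂ : Tendsto w₂ atTop (nhds w₂'))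
    (hcProb : ∀ ε > (0 : ℝ), Tendsto (fun n => P {ω | ε < |c n ω|}) atTop (nhds 0)) :
    TendstoInDistribution P (fun n ω => w₁ n * A n ω + w₂ n * B n ω + c n ω)
      (ProbabilityTheory.gaussianReal 0 1) := by
  have hw' : w₁' ^ 2 + w₂' ^ 2 = 1 :=
    tendsto_nhds_unique ((hw₁.pow 2).add (hw₂.pow 2)) (by simp only [hw, tendsto_const_nhds])
  have hlaw : ((gaussianReal 0 1).prod (gaussianReal 0 1)).map
      (fun p ↦ w₁' * p.1 + w₂' * p.2 + 0) = gaussianReal 0 1 := by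
    simp only [add_zero, gaussianReal_prod_map_linear]
    congr 1
    · ring
    · exact NNReal.eq (by simp only [NNReal.coe_one, mul_one]; exact hw')
  have hA' := (tendstoInDistribution_map_iff (fun n ↦ (hA n).aemeasurable) aemeasurable_id).1
    (by rwa [Measure.map_id])
  have hB' := (tendstoInDistribution_map_iff (fun n ↦ (hB n).aemeasurable) aemeasurable_id).1
    (by rwa [Measure.map_id])
  have hlin := (hA'.prodMk_of_indepFun hB' hIndep).continuous_comp_prodMk_of_tendstoInMeasure_const
    (g := fun q : (ℝ × ℝ) × (ℝ × ℝ) ↦ q.2.1 * q.1.1 + q.2.2 * q.1.2) (by fun_prop)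
    (tendstoInMeasure_const_of_tendsto (hw₁.prodMk_nhds hw₂)) (fun _ ↦ aemeasurable_const)
  have hsum := hlin.add_of_tendstoInMeasure_const
    (tendstoInMeasure_zero_of_tendsto_measure_lt_norm
      (by simpa only [Real.norm_eq_abs] using hcProb))
    (fun n ↦ (hc n).aemeasurable)
  rw [← hlaw]
  exact (tendstoInDistribution_map_iff (fun n ↦ by fun_prop) (by fun_prop)).2 hsum
end
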